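/- For drawing without replacement from an urn with configuration (x_1,...,x_m), the probability that the first r-collision time exceeds k equals (k!(n-k)!/n!) times the coefficient of t^k in the product over i of p_r(x_i, t), where p_r(x,t) = sum_{i=0}^{r-1} binom(x,i) t^i. -/

import Mathlib

/-! The event `K_r > k` depends only on the set `σ '' {0, …, k-1}` of the first `k` balls
drawn. By orbit–stabilizer for `Perm (Fin n)` acting on `k`-subsets, every `k`-subset arises
from exactly `k! (n-k)!` permutations. Expanding `∏ᵢ p_r(xᵢ, t)` as a sum over tuples of subsets
of the colour classes, its coefficient of `t^k` counts the `k`-subsets with fewer than `r` balls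
of each colour. -/

open Finset Polynomial

/-- `p_r(x,t) = ∑_{i=0}^{r-1} binom(x,i) t^i` as a polynomial over `ℚ`. -/
noncomputable def pr (r x : ℕ) : Polynomial ℚ :=
  ∑ i ∈ Finset.range r, Polynomial.C ((Nat.choose x i : ℚ)) * Polynomial.X ^ i

open scoped Nat Pointwise

theorem pr_card_eq_sum_powerset {β : Type*} (r : ℕ) (s : Finset β) :
    pr r #s = ∑ T ∈ s.powerset with #T < r, X ^ #T := by
  rw [← sum_fiberwise_of_maps_to (g := card) (t := range r) (by simp)]
  refine sum_congr rfl fun j hj => ?_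
  have fiber_eq : {T ∈ {T ∈ s.powerset | #T < r} | #T = j} = s.powersetCard j := by
    rw [powersetCard_eq_filter, filter_filter]
    exact filter_congr fun T _ => by grind
  rw [fiber_eq, sum_congr rfl fun T hT => by rw [(mem_powersetCard.1 hT).2], sum_const,
    card_powersetCard, nsmul_eq_mul, C_eq_natCast]

section
variable {α ι : Type*} [DecidableEq α] [Fintype ι] [DecidableEq ι]

theorem filter_biUnion_eq_of_forall_mem {c : α → ι} {T : ι → Finset α}
    (hT : ∀ i, ∀ a ∈ T i, c a = i) (i : ι) : {a ∈ univ.biUnion T | c a = i} = T i := by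
  ext a
  simp only [mem_filter, mem_biUnion, mem_univ, true_and]
  exact ⟨fun ⟨⟨j, ha⟩, hi⟩ => hi ▸ (hT j a ha).symm ▸ ha, fun ha => ⟨⟨i, ha⟩, hT i a ha⟩⟩

theorem prod_pr_card_fiber [Fintype α] (r : ℕ) (c : α → ι) :
    ∏ i, pr r #{a | c a = i} = ∑ S with ∀ i, #{a ∈ S | c a = i} < r, X ^ #S := by
  simp_rw [pr_card_eq_sum_powerset, prod_univ_sum, prod_pow_eq_pow_sum]
  have mem_pi {T : ι → Finset α} : (T ∈ Fintype.piFinset fun i =>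
      {U ∈ ({a | c a = i} : Finset α).powerset | #U < r}) ↔
      ∀ i, (∀ a ∈ T i, c a = i) ∧ #(T i) < r := by
    simp [Fintype.mem_piFinset, subset_iff]
  refine sum_nbij' (fun T => univ.biUnion T) (fun S i => {a ∈ S | c a = i}) ?_ ?_ ?_ ?_ ?_
  · intro T hT
    rw [mem_pi] at hT
    simp [filter_biUnion_eq_of_forall_mem fun i => (hT i).1, hT]
  · intro S hS
    exact mem_pi.2 fun i => ⟨by simp, by simp_all⟩
  · intro T hT
    rw [mem_pi] at hT
    exact funext (filter_biUnion_eq_of_forall_mem fun i => (hT i).1)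
  · intro S _
    ext a
    simp
  · intro T hT
    rw [mem_pi] at hT
    rw [card_biUnion]
    intro i _ j _ hij
    exact disjoint_left.2 fun a hi hj => hij (((hT i).1 a hi).symm.trans ((hT j).1 a hj))

theorem coeff_prod_pr_card_fiber [Fintype α] (r k : ℕ) (c : α → ι) :
    (∏ i, pr r #{a | c a = i}).coeff k =
      #{S : Finset α | #S = k ∧ ∀ i, #{a ∈ S | c a = i} < r} := by
  rw [prod_pr_card_fiber, finsetSum_coeff]
  simp_rw [coeff_X_pow, eq_comm (a := k)]
  rw [sum_boole, filter_filter]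
  simp only [and_comm]

end

theorem MulAction.card_filter_smul_eq_mul_card_stabilizer {G X : Type*} [Group G] [Fintype G]
    [MulAction G X] [IsPretransitive G X] [Fintype X] [DecidableEq X] (a : X) (P : X → Prop)
    [DecidablePred P] : #{g : G | P (g • a)} = #{x | P x} * Nat.card (stabilizer G a) := by
  rw [card_eq_sum_card_fiberwise (f := (· • a)) (t := {x | P x}) (by intro g; simp)]
  refine sum_const_nat fun x hx => ?_
  obtain ⟨τ, rfl⟩ := exists_smul_eq G a x
  rw [filter_filter, ← Fintype.card_subtype, ← Nat.card_eq_fintype_card]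
  refine Nat.card_congr (Equiv.subtypeEquiv (Equiv.mulLeft τ⁻¹) fun g => ?_)
  rw [mem_filter] at hx
  simp only [Equiv.coe_mulLeft, mem_stabilizer_iff, mul_smul, inv_smul_eq_iff]
  exact ⟨And.right, fun h => ⟨h ▸ hx.2, h⟩⟩

theorem MulAction.card_stabilizer_mul_card {G X : Type*} [Group G] [Fintype G]
    [MulAction G X] [IsPretransitive G X] [Fintype X] (a : X) :
    Nat.card (stabilizer G a) * Fintype.card X = Fintype.card G := by
  classical
  simpa [mul_comm] using (card_filter_smul_eq_mul_card_stabilizer (G := G) a fun _ => True).symm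

theorem Equiv.Perm.card_filter_smul_finset {α : Type*} [Fintype α] [DecidableEq α] (A : Finset α)
    (P : Finset α → Prop) [DecidablePred P] :
    #{σ : Perm α | P (σ • A)} = #{S | #S = #A ∧ P S} * ((#A)! * (Fintype.card α - #A)!) := by
  have := Set.powersetCard.isPretransitive (α := α) (n := #A)
  let A' : Set.powersetCard α #A := Set.powersetCard.ofCard rfl
  have card_stabilizer : Nat.card (MulAction.stabilizer (Perm α) A') =
      (#A)! * (Fintype.card α - #A)! := by
    have h := MulAction.card_stabilizer_mul_card (G := Perm α) A'
    have card_powersetCard :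
        Fintype.card (Set.powersetCard α #A) = (Fintype.card α).choose #A := by
      rw [← Nat.card_eq_fintype_card, Set.powersetCard.card, Nat.card_eq_fintype_card]
    rw [card_powersetCard, Fintype.card_perm,
      ← Nat.choose_mul_factorial_mul_factorial (card_le_univ A), mul_assoc, mul_comm] at h
    exact Nat.eq_of_mul_eq_mul_left (Nat.choose_pos (card_le_univ A)) h
  have h := MulAction.card_filter_smul_eq_mul_card_stabilizer (G := Perm α) A' fun S => P S
  rw [card_stabilizer] at h
  convert h using 2
  · rfl
  · symm
    refine card_bij (fun S _ => S.1) (fun S hS => ?_) (fun _ _ _ _ => Subtype.ext)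
      fun S hS => ?_
    · simp_all [Set.powersetCard.card_eq]
    · simp only [mem_filter, mem_univ, true_and] at hS
      exact ⟨Set.powersetCard.ofCard hS.1, by simpa using hS.2, rfl⟩

theorem collision_time_without_replacement_gen_fun_general
    (n m k r : ℕ) (x : Fin m → ℕ) (c : Fin n → Fin m)
    (hx : ∀ i, (Finset.univ.filter (fun b : Fin n => c b = i)).card = x i)
    (hk : k ≤ n) (hr : 2 ≤ r) :
    (Nat.card {σ : Equiv.Perm (Fin n) // ∀ i : Fin m,
        (Finset.univ.filter (fun t : Fin n => t.val < k ∧ c (σ t) = i)).card ≤ r - 1} : ℚ)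
      / (Nat.factorial n : ℚ)
    = ((Nat.factorial k : ℚ) * (Nat.factorial (n - k) : ℚ) / (Nat.factorial n : ℚ)) *
        (∏ i, pr r (x i)).coeff k := by
  let A : Finset (Fin n) := {t | t.val < k}
  have card_A : #A = k := by simp [A, Fin.card_filter_val_lt, hk]
  have count_eq (σ : Equiv.Perm (Fin n)) (i : Fin m) :
      #{t | t.val < k ∧ c (σ t) = i} = #{b ∈ σ • A | c b = i} := by
    rw [smul_finset_def, filter_image, card_image_of_injective _ (MulAction.injective σ),
      filter_filter]
    rfl
  simp_rw [count_eq, Nat.le_sub_one_iff_lt (by omega : 0 < r), ← hx, coeff_prod_pr_card_fiber]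
  rw [Nat.card_eq_fintype_card, Fintype.card_subtype,
    Equiv.Perm.card_filter_smul_finset A fun S => ∀ i, #{b ∈ S | c b = i} < r, card_A,
    Fintype.card_fin]
  rw [Nat.cast_mul, Nat.cast_mul, mul_comm, mul_div_right_comm]
  -- the two sides differ only in the `Decidable` instances of their filters
  congr!

/-- Drawing without replacement from configuration `(x_1,…,x_m)`:
`P(K_r^{(1)} > k) = (k!(n-k)!/n!) · [t^k] ∏_i p_r(x_i,t)`. -/
theorem collision_time_without_replacement_gen_fun
    (n m k r : ℕ) (x : Fin m → ℕ) (c : Fin n → Fin m)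
    (hx : ∀ i, (Finset.univ.filter (fun b : Fin n => c b = i)).card = x i)
    (hn : ∑ i, x i = n) (hk : k ≤ n) (hr : 2 ≤ r) :
    (Nat.card {σ : Equiv.Perm (Fin n) // ∀ i : Fin m,
        (Finset.univ.filter (fun t : Fin n => t.val < k ∧ c (σ t) = i)).card ≤ r - 1} : ℚ)
      / (Nat.factorial n : ℚ)
    = ((Nat.factorial k : ℚ) * (Nat.factorial (n - k) : ℚ) / (Nat.factorial n : ℚ)) *
        (∏ i, pr r (x i)).coeff k :=
  collision_time_without_replacement_gen_fun_general n m k r x c hx hk hr
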